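/- Let m ∈ ℕ with m ≥ 1 and put r = 1/(m+2) and R = (2m+2)/(m(m+2)). Then R > r > 0, (R - r)/r = (m+2)/m, and for every θ ∈ ℝ: -(R - r)·sin(mθ) + r·sin( ((R-r)/r)·mθ ) = -sin(mθ)/m + sin((m+2)θ)/(m+2) and -(R - r)·cos(mθ) - r·cos( ((R-r)/r)·mθ ) = -cos(mθ)/m - cos((m+2)θ)/(m+2). -/

import Mathlib

/-! The key identity is `R - r = 1/m`: it makes the frequency ratio `(R - r)/r` equal to
`(m + 2)/m`, so the second term of the hypocycloid at `t = mθ` oscillates at frequency `m + 2`,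
and both coordinates then agree as rational functions of `m`. -/

lemma outer_sub_inner_radius {m : ℝ} (hm : m ≠ 0) (hm₂ : m + 2 ≠ 0) :
    (2 * m + 2) / (m * (m + 2)) - 1 / (m + 2) = 1 / m := by
  field_simp
  ring

theorem hypocycloid_parametrization (m : ℕ) (hm : 1 ≤ m) (r R : ℝ)
    (hr : r = 1 / (m + 2)) (hR : R = (2 * m + 2) / (m * (m + 2))) :
    0 < r ∧ r < R ∧ (R - r) / r = (m + 2) / m ∧
    ∀ θ : ℝ,
      (-(R - r) * Real.sin (m * θ) + r * Real.sin (((R - r) / r) * (m * θ)) =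
        -Real.sin (m * θ) / m + Real.sin ((m + 2) * θ) / (m + 2)) ∧
      (-(R - r) * Real.cos (m * θ) - r * Real.cos (((R - r) / r) * (m * θ)) =
        -Real.cos (m * θ) / m - Real.cos ((m + 2) * θ) / (m + 2)) := by
  have hm₀ : (0 : ℝ) < m := by exact_mod_cast hm
  have hsub : R - r = 1 / m := by
    rw [hR, hr]
    exact outer_sub_inner_radius hm₀.ne' (by positivity)
  have hratio : (R - r) / r = (m + 2) / m := by
    rw [hsub, hr, div_div_div_cancel_left' _ _ one_ne_zero]
  have harg (θ : ℝ) : (R - r) / r * (m * θ) = (m + 2) * θ := by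
    rw [hratio]
    field_simp
  refine ⟨hr ▸ by positivity, ?_, hratio, fun θ => ?_⟩
  · linarith [show (0 : ℝ) < 1 / m by positivity]
  · rw [harg, hsub, hr]
    constructor <;> ring
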